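/- Let M = [[A, B],[B^T, C]] be a symmetric positive semidefinite block matrix. Then rank M = rank A + rank (C - B^T A^† B), i.e., the rank of M equals the rank of A plus the rank of the generalized Schur complement of A in M. -/

import Mathlib

open Matrix

open scoped Classical

/-- Moore–Penrose pseudoinverse of a real matrix, defined via the four Penrose
conditions (which determine it uniquely when it exists). -/
noncomputable def pinv {n m : ℕ} (A : Matrix (Fin n) (Fin m) ℝ) : Matrix (Fin m) (Fin n) ℝ :=
  if h : ∃ X : Matrix (Fin m) (Fin n) ℝ,
      A * X * A = A ∧ X * A * X = X ∧ (A * X)ᵀ = A * X ∧ (X * A)ᵀ = X * A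
  then h.choose else 0

/-!
If `A v = 0`, the vector `(v, 0)` is isotropic for the positive semidefinite `M`, hence lies in
`ker M`; so `ker A ⊆ ker Bᵀ`. Together with the Penrose identities this gives `A A^† B = B`, and
then `M = L (A ⊕ M/A) Lᵀ` with `L = [[1, 0], [(A^† B)ᵀ, 1]]` unipotent, so
`rank M = rank (A ⊕ M/A) = rank A + rank (M/A)`.
-/

theorem Submodule.finrank_prod {K M N : Type*} [Field K] [AddCommGroup M] [AddCommGroup N]
    [Module K M] [Module K N] [FiniteDimensional K M] [FiniteDimensional K N]
    (p : Submodule K M) (q : Submodule K N) :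
    Module.finrank K (p.prod q) = Module.finrank K p + Module.finrank K q := by
  rw [← Module.finrank_prod]
  exact LinearEquiv.finrank_eq
    { toFun := fun x => (⟨x.1.1, x.2.1⟩, ⟨x.1.2, x.2.2⟩)
      invFun := fun y => ⟨(y.1.1, y.2.1), y.1.2, y.2.2⟩
      map_add' := fun _ _ => rfl
      map_smul' := fun _ _ => rfl }

namespace Matrix

variable {n m : Type*} [Fintype n]

theorem rank_fromBlocks_zero_zero {n' m' K : Type*} [Fintype m] [Fintype n'] [Fintype m']
    [Field K] (A : Matrix n' n K) (D : Matrix m' m K) :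
    (fromBlocks A 0 0 D).rank = A.rank + D.rank := by
  let b := (Pi.basisFun K n).prod (Pi.basisFun K m)
  let b' := (Pi.basisFun K n').prod (Pi.basisFun K m')
  have h : fromBlocks A 0 0 D = LinearMap.toMatrix b b' ((toLin' A).prodMap (toLin' D)) := by
    ext (i | i) (j | j) <;> simp [LinearMap.toMatrix_apply, b, b']
  rw [rank_eq_finrank_range_toLin _ b' b, h, toLin_toMatrix, LinearMap.range_prodMap,
    Submodule.finrank_prod]
  rfl

open scoped ComplexOrder in
theorem PosSemidef.fromBlocks₂₁_mulVec_eq_zero {𝕜 : Type*} [Fintype m] [RCLike 𝕜]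
    {A : Matrix n n 𝕜} {B : Matrix n m 𝕜} {B' : Matrix m n 𝕜} {C : Matrix m m 𝕜}
    (hM : (fromBlocks A B B' C).PosSemidef) {v : n → 𝕜} (hv : A *ᵥ v = 0) : B' *ᵥ v = 0 := by
  have hMv : fromBlocks A B B' C *ᵥ Sum.elim v 0 = 0 :=
    (hM.dotProduct_mulVec_zero_iff _).mp
      (by simp [fromBlocks_mulVec, hv, dotProduct, Fintype.sum_sum_type])
  ext i
  simpa [fromBlocks_mulVec] using congrFun hMv (Sum.inr i)

variable [DecidableEq n]

theorem exists_penrose_of_transpose_eq {A : Matrix n n ℝ} (hA : Aᵀ = A) :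
    ∃ X : Matrix n n ℝ,
      A * X * A = A ∧ X * A * X = X ∧ (A * X)ᵀ = A * X ∧ (X * A)ᵀ = X * A := by
  have hA' : IsSelfAdjoint A := by
    rw [IsSelfAdjoint, star_eq_conjTranspose, conjTranspose_eq_transpose_of_trivial, hA]
  have cont (f : ℝ → ℝ) : ContinuousOn f (spectrum ℝ A) := finite_real_spectrum.continuousOn f
  have mul_cfc (f : ℝ → ℝ) : A * cfc f A = cfc (fun x => x * f x) A := by
    rw [cfc_mul _ _ A (cont _) (cont _), cfc_id' ℝ A]
  have cfc_mul' (f : ℝ → ℝ) : cfc f A * A = cfc (fun x => f x * x) A := by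
    rw [cfc_mul _ _ A (cont _) (cont _), cfc_id' ℝ A]
  have transpose_cfc (f : ℝ → ℝ) : (cfc f A)ᵀ = cfc f A := by
    rw [← conjTranspose_eq_transpose_of_trivial, ← star_eq_conjTranspose]
    exact cfc_predicate f A
  -- inverting the eigenvalues, with `0⁻¹ = 0` on the kernel
  refine ⟨cfc (fun x : ℝ => x⁻¹) A, ?_, ?_, ?_, ?_⟩
  · rw [mul_cfc, cfc_mul']
    simp only [mul_inv_mul_cancel]
    exact cfc_id' ℝ A
  · rw [cfc_mul', ← cfc_mul _ _ A (cont _) (cont _)]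
    congr! 2 with x
    simpa using mul_inv_mul_cancel x⁻¹
  · rw [mul_cfc, transpose_cfc]
  · rw [cfc_mul', transpose_cfc]

variable {R : Type*} [CommRing R]

theorem mul_mul_eq_of_ker_le_ker {A X : Matrix n n R} {B : Matrix n m R} (hA : Aᵀ = A)
    (hAXA : A * X * A = A) (hAX : (A * X)ᵀ = A * X)
    (hker : ∀ v, A *ᵥ v = 0 → Bᵀ *ᵥ v = 0) : A * X * B = B := by
  have hAN : A * (1 - A * X) = 0 := by
    have : ((1 - A * X) * A)ᵀ = A * (1 - A * X) := by
      rw [transpose_mul, hA, transpose_sub, transpose_one, hAX]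
    rw [← this, sub_mul, one_mul, hAXA, sub_self, transpose_zero]
  have hBN : Bᵀ * (1 - A * X) = 0 := by
    rw [ext_iff_mulVec]
    intro v
    rw [← mulVec_mulVec, hker _ (by rw [mulVec_mulVec, hAN, zero_mulVec]), zero_mulVec]
  rw [Matrix.mul_sub, Matrix.mul_one, sub_eq_zero] at hBN
  have := congrArg transpose hBN
  rwa [transpose_transpose, transpose_mul, transpose_transpose, hAX, eq_comm] at this

theorem fromBlocks_eq_mul_fromBlocks_mul_transpose [Fintype m] [DecidableEq m]
    {A X : Matrix n n R} {B : Matrix n m R} (C : Matrix m m R) (hA : Aᵀ = A)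
    (h : A * X * B = B) :
    fromBlocks A B Bᵀ C = fromBlocks 1 0 (X * B)ᵀ 1 * fromBlocks A 0 0 (C - Bᵀ * X * B) *
      (fromBlocks 1 0 (X * B)ᵀ 1)ᵀ := by
  have hXBA : (X * B)ᵀ * A = Bᵀ := by
    conv_lhs => rw [← hA]
    rw [← transpose_mul, ← Matrix.mul_assoc, h]
  rw [fromBlocks_transpose, fromBlocks_multiply, fromBlocks_multiply]
  simp only [transpose_one, transpose_zero, transpose_transpose, Matrix.one_mul, Matrix.mul_one,
    Matrix.zero_mul, Matrix.mul_zero, add_zero, zero_add, hXBA]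
  rw [← Matrix.mul_assoc, h, ← Matrix.mul_assoc, add_sub_cancel]

end Matrix

theorem pinv_spec_of_transpose_eq {n : ℕ} {A : Matrix (Fin n) (Fin n) ℝ} (hA : Aᵀ = A) :
    A * pinv A * A = A ∧ pinv A * A * pinv A = pinv A ∧
      (A * pinv A)ᵀ = A * pinv A ∧ (pinv A * A)ᵀ = pinv A * A := by
  rw [pinv, dif_pos (exists_penrose_of_transpose_eq hA)]
  exact (exists_penrose_of_transpose_eq hA).choose_spec

theorem stmt2 {n m : ℕ} (A : Matrix (Fin n) (Fin n) ℝ) (B : Matrix (Fin n) (Fin m) ℝ)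
    (C : Matrix (Fin m) (Fin m) ℝ) (hA : Aᵀ = A)
    (hM : (Matrix.fromBlocks A B Bᵀ C).PosSemidef) :
    (Matrix.fromBlocks A B Bᵀ C).rank = A.rank + (C - Bᵀ * pinv A * B).rank := by
  obtain ⟨hAXA, -, hAX, -⟩ := pinv_spec_of_transpose_eq hA
  have hAXB : A * pinv A * B = B :=
    mul_mul_eq_of_ker_le_ker hA hAXA hAX fun _ => hM.fromBlocks₂₁_mulVec_eq_zero
  rw [fromBlocks_eq_mul_fromBlocks_mul_transpose C hA hAXB,
    rank_mul_eq_left_of_isUnit_det _ _ (by simp),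
    rank_mul_eq_right_of_isUnit_det _ _ (by simp), rank_fromBlocks_zero_zero]
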